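/- arXiv:math/0703687 — 3 statements merged into one kernel-verified Lean document; each statement's English description precedes it below -/
import Mathlib

section
/- For all r in (0,1), the complete elliptic integral of the first kind satisfies the Landen identity: K(2√r/(1+r)) = (1+r)·K(r). -/
/-!
The substitution `x = sin θ` turns `K(k)` into `∫₀¹ dx / √((1 - x²)(1 - k²x²))`. Landen's
substitution `y = (1 + r) x / (1 + r x²)` maps `[0, 1]` monotonically onto itself, and with
`k = 2√r / (1 + r)` it satisfies
`(1 - y²)(1 - k²y²) = (1 - x²)(1 - r²x²) (y' / (1 + r))²`,
so `dy / √((1 - y²)(1 - k²y²)) = (1 + r) dx / √((1 - x²)(1 - r²x²))`.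
-/

noncomputable def ellK (r : ℝ) : ℝ :=
  ∫ θ in (0:ℝ)..(Real.pi/2), 1 / Real.sqrt (1 - r^2 * Real.sin θ ^ 2)

open MeasureTheory Set Real

noncomputable def ellKIntegrand (k x : ℝ) : ℝ :=
  1 / √((1 - x ^ 2) * (1 - k ^ 2 * x ^ 2))

theorem ellK_eq_integral_Icc (k : ℝ) : ellK k = ∫ x in Icc 0 1, ellKIntegrand k x := by
  have hpi : 0 ≤ π / 2 := by positivity
  have hsubst := integral_Icc_deriv_smul_of_deriv_nonneg (g := ellKIntegrand k)
    continuous_sin.continuousOn (fun θ _ => hasDerivAt_sin θ)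
    (fun θ hθ => (cos_pos_of_mem_Ioo ⟨by linarith [hθ.1], hθ.2⟩).le) hpi
  rw [sin_zero, sin_pi_div_two] at hsubst
  rw [← hsubst, ellK, intervalIntegral.integral_of_le hpi, ← integral_Icc_eq_integral_Ioc,
    integral_Icc_eq_integral_Ioo, integral_Icc_eq_integral_Ioo]
  refine setIntegral_congr_fun measurableSet_Ioo fun θ hθ => ?_
  have hcos : 0 < cos θ := cos_pos_of_mem_Ioo ⟨by linarith [hθ.1], hθ.2⟩
  rw [ellKIntegrand, smul_eq_mul, ← cos_sq', sqrt_mul (sq_nonneg _), sqrt_sq hcos.le,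
    mul_one_div, div_mul_cancel_left₀ hcos.ne', one_div]

noncomputable def landenMap (r x : ℝ) : ℝ := (1 + r) * x / (1 + r * x ^ 2)

theorem hasDerivAt_landenMap {r : ℝ} (hr : 0 ≤ r) (x : ℝ) :
    HasDerivAt (landenMap r) ((1 + r) * (1 - r * x ^ 2) / (1 + r * x ^ 2) ^ 2) x := by
  have hD : 1 + r * x ^ 2 ≠ 0 := by positivity
  refine (((hasDerivAt_id x).const_mul (1 + r)).div
    (((hasDerivAt_pow 2 x).const_mul r).const_add 1) hD).congr_deriv ?_
  simp only [id, Nat.cast_ofNat]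
  ring

theorem one_sub_landenMap_sq_mul {r x : ℝ} (hr : 0 ≤ r) :
    (1 - landenMap r x ^ 2) * (1 - (2 * √r / (1 + r)) ^ 2 * landenMap r x ^ 2) =
      (1 - x ^ 2) * (1 - r ^ 2 * x ^ 2) * ((1 - r * x ^ 2) / (1 + r * x ^ 2) ^ 2) ^ 2 := by
  have hD : 1 + r * x ^ 2 ≠ 0 := by positivity
  have h1r : 1 + r ≠ 0 := by positivity
  simp only [landenMap, div_pow, mul_pow, sq_sqrt hr]
  field_simp
  ring

theorem landen_deriv_mul_ellKIntegrand {r x : ℝ} (hr0 : 0 ≤ r) (hr1 : r ≤ 1)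
    (hx : x ∈ Ioo 0 1) :
    (1 + r) * (1 - r * x ^ 2) / (1 + r * x ^ 2) ^ 2 *
        ellKIntegrand (2 * √r / (1 + r)) (landenMap r x) = (1 + r) * ellKIntegrand r x := by
  obtain ⟨hx0, hx1⟩ := hx
  have hx2 : x ^ 2 < 1 := by nlinarith
  have hP : 0 < 1 - r * x ^ 2 := by nlinarith
  have hS : 0 < (1 - x ^ 2) * (1 - r ^ 2 * x ^ 2) := mul_pos (by linarith)
    (by nlinarith [mul_le_mul_of_nonneg_right hr1 (mul_nonneg hr0 (sq_nonneg x))])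
  have hc : 0 < (1 - r * x ^ 2) / (1 + r * x ^ 2) ^ 2 := by positivity
  rw [ellKIntegrand, ellKIntegrand, one_sub_landenMap_sq_mul hr0, sqrt_mul hS.le, sqrt_sq hc.le,
    mul_div_assoc]
  field_simp

theorem integral_ellKIntegrand_landen {r : ℝ} (hr0 : 0 ≤ r) (hr1 : r ≤ 1) :
    ∫ x in Icc 0 1, ellKIntegrand (2 * √r / (1 + r)) x =
      (1 + r) * ∫ x in Icc 0 1, ellKIntegrand r x := by
  have h0 : landenMap r 0 = 0 := by simp [landenMap]
  have h1 : landenMap r 1 = 1 := by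
    rw [landenMap]; field_simp
  have hsubst := integral_Icc_deriv_smul_of_deriv_nonneg (g := ellKIntegrand (2 * √r / (1 + r)))
    (fun x _ => (hasDerivAt_landenMap hr0 x).continuousAt.continuousWithinAt)
    (fun x _ => hasDerivAt_landenMap hr0 x)
    (fun x hx => by
      have : r * x ^ 2 ≤ 1 := by nlinarith [hx.1, hx.2]
      positivity)
    zero_le_one
  rw [h0, h1] at hsubst
  rw [← hsubst, ← integral_const_mul, integral_Icc_eq_integral_Ioo, integral_Icc_eq_integral_Ioo]
  exact setIntegral_congr_fun measurableSet_Ioo fun x hx =>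
    landen_deriv_mul_ellKIntegrand hr0 hr1 hx

theorem landen_identity (r : ℝ) (hr : r ∈ Set.Ioo (0:ℝ) 1) :
    ellK (2 * Real.sqrt r / (1 + r)) = (1 + r) * ellK r := by
  rw [ellK_eq_integral_Icc, ellK_eq_integral_Icc]
  exact integral_ellKIntegrand_landen hr.1.le hr.2.le
end

section
/- For x, y > 0, the logarithmic mean is at most the arithmetic-geometric mean: L(x,y) ≤ AG(x,y). -/
/-!
Write `a = e^(m+t)`, `b = e^(m-t)`. Then `√(ab) = e^m` and `(a+b)/2 = e^m cosh t`, so by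
homogeneity of `L` one AGM step does not decrease `L` as soon as
`sinh t / t ≤ (cosh t - 1) / log (cosh t)`. As `cosh t - 1 = sinh t · tanh (t/2)`, this is
`log (cosh t) ≤ t tanh (t/2)`: both sides vanish at `0` and the right one has the larger
derivative. Hence `L(x,y) ≤ L(aₙ,bₙ) ≤ aₙ → AG(x,y)`, using `L(a,b) ≤ max a b`.
-/

noncomputable def agmSeq (x y : ℝ) : ℕ → ℝ × ℝ
  | 0 => (x, y)
  | n+1 => (((agmSeq x y n).1 + (agmSeq x y n).2)/2,
      Real.sqrt ((agmSeq x y n).1 * (agmSeq x y n).2))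

noncomputable def AG (x y : ℝ) : ℝ :=
  Filter.limUnder Filter.atTop fun n => (agmSeq x y n).1

noncomputable def Lmean (x y : ℝ) : ℝ :=
  if x = y then x else (x - y) / Real.log (x / y)

open Real Filter Topology

theorem nonneg_of_hasDerivAt_nonneg {f f' : ℝ → ℝ} (hf : ∀ s, HasDerivAt f (f' s) s)
    (hf' : ∀ s, 0 < s → 0 ≤ f' s) (hf0 : f 0 = 0) {t : ℝ} (ht : 0 ≤ t) : 0 ≤ f t := by
  have hmono : MonotoneOn f (Set.Ici 0) :=
    monotoneOn_of_hasDerivWithinAt_nonneg (convex_Ici 0)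
      (fun s _ => (hf s).continuousAt.continuousWithinAt) (fun s _ => (hf s).hasDerivWithinAt)
      (fun s hs => hf' s (by simpa using hs))
  simpa [hf0] using hmono Set.self_mem_Ici ht ht

namespace Real

theorem hasDerivAt_tanh (x : ℝ) : HasDerivAt tanh (1 - tanh x ^ 2) x := by
  have h := (hasDerivAt_sinh x).div (hasDerivAt_cosh x) (cosh_pos x).ne'
  rw [tanh_eq_sinh_div_cosh, show tanh = sinh / cosh from funext tanh_eq_sinh_div_cosh]
  refine h.congr_deriv ?_
  have := cosh_pos x
  field_simp

theorem tanh_nonneg {x : ℝ} (hx : 0 ≤ x) : 0 ≤ tanh x := by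
  rw [tanh_eq_sinh_div_cosh]
  exact div_nonneg (sinh_nonneg_iff.2 hx) (cosh_pos x).le

theorem tanh_two_mul (x : ℝ) : tanh (2 * x) = 2 * tanh x / (1 + tanh x ^ 2) := by
  rw [tanh_eq_sinh_div_cosh, tanh_eq_sinh_div_cosh, sinh_two_mul, cosh_two_mul]
  have := cosh_pos x
  field_simp

theorem sinh_mul_tanh_half (x : ℝ) : sinh x * tanh (x / 2) = cosh x - 1 := by
  conv_lhs => rw [← mul_div_cancel₀ x two_ne_zero]
  conv_rhs => rw [← mul_div_cancel₀ x two_ne_zero]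
  rw [tanh_eq_sinh_div_cosh, sinh_two_mul, cosh_two_mul]
  have := cosh_pos (x / 2)
  field_simp
  linarith [cosh_sq_sub_sinh_sq (x / 2)]

theorem tanh_le_self {x : ℝ} (hx : 0 ≤ x) : tanh x ≤ x :=
  sub_nonneg.1 <| nonneg_of_hasDerivAt_nonneg
    (fun s => (hasDerivAt_id s).sub (hasDerivAt_tanh s)) (fun s _ => by simp [sq_nonneg])
    (by simp) hx

theorem log_cosh_le_mul_tanh_half {t : ℝ} (ht : 0 ≤ t) : log (cosh t) ≤ t * tanh (t / 2) := by
  have hderiv : ∀ s, HasDerivAt (fun s => s * tanh (s / 2) - log (cosh s))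
      (1 * tanh (s / 2) + s * ((1 - tanh (s / 2) ^ 2) * (1 / 2)) - sinh s / cosh s) s := fun s =>
    ((hasDerivAt_id' s).mul
      (((hasDerivAt_tanh (s / 2)).comp s ((hasDerivAt_id' s).div_const 2) :))).sub
      ((hasDerivAt_cosh s).log (cosh_pos s).ne')
  refine sub_nonneg.1 <| nonneg_of_hasDerivAt_nonneg hderiv (fun s hs => ?_) (by simp) ht
  set u := tanh (s / 2)
  have hu0 : 0 ≤ u := tanh_nonneg (by linarith)
  have hus : u ≤ s / 2 := tanh_le_self (by linarith)
  have hu1 : 0 ≤ 1 - u ^ 2 := by linarith [tanh_sq_lt_one (s / 2)]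
  have hden : 0 < 1 + u ^ 2 := by positivity
  have htanh : tanh s = 2 * u / (1 + u ^ 2) := by
    rw [← tanh_two_mul, mul_div_cancel₀ s two_ne_zero]
  rw [← tanh_eq_sinh_div_cosh, htanh, sub_nonneg, div_le_iff₀ hden]
  -- replacing `s / 2` by `u` leaves a slack of `u ^ 3 * (1 - u ^ 2)`
  nlinarith [mul_nonneg (mul_nonneg (sub_nonneg.2 hus) hu1) hden.le,
    mul_nonneg (pow_nonneg hu0 3) hu1]

theorem sinh_div_le_cosh_sub_one_div_log_cosh {t : ℝ} (ht : 0 < t) :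
    sinh t / t ≤ (cosh t - 1) / log (cosh t) := by
  have hlog : 0 < log (cosh t) := log_pos (one_lt_cosh.2 ht.ne')
  rw [div_le_div_iff₀ ht hlog]
  calc sinh t * log (cosh t) ≤ sinh t * (t * tanh (t / 2)) :=
        mul_le_mul_of_nonneg_left (log_cosh_le_mul_tanh_half ht.le) (sinh_nonneg_iff.2 ht.le)
    _ = (cosh t - 1) * t := by rw [← sinh_mul_tanh_half]; ring

end Real

theorem Lmean_self (x : ℝ) : Lmean x x = x := if_pos rfl

theorem Lmean_of_ne {x y : ℝ} (h : x ≠ y) : Lmean x y = (x - y) / log (x / y) := if_neg h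

theorem Lmean_comm (x y : ℝ) : Lmean x y = Lmean y x := by
  rcases eq_or_ne x y with rfl | h
  · rfl
  · rw [Lmean_of_ne h, Lmean_of_ne h.symm, ← inv_div x y, log_inv, div_neg, ← neg_div, neg_sub]

theorem Lmean_mul_mul {c : ℝ} (hc : c ≠ 0) (x y : ℝ) :
    Lmean (c * x) (c * y) = c * Lmean x y := by
  rcases eq_or_ne x y with rfl | h
  · simp only [Lmean_self]
  · rw [Lmean_of_ne h, Lmean_of_ne ((mul_right_injective₀ hc).ne h), mul_div_mul_left _ _ hc,
      ← mul_sub, mul_div_assoc]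

theorem Lmean_exp_exp_neg {t : ℝ} (ht : t ≠ 0) : Lmean (exp t) (exp (-t)) = sinh t / t := by
  rw [Lmean_of_ne (exp_injective.ne (by contrapose! ht; linarith)), ← exp_sub, log_exp, sinh_eq]
  field_simp
  ring

theorem Lmean_cosh_one {t : ℝ} (ht : t ≠ 0) :
    Lmean (cosh t) 1 = (cosh t - 1) / log (cosh t) := by
  rw [Lmean_of_ne (one_lt_cosh.2 ht).ne', div_one]

theorem Lmean_le_of_le {x y : ℝ} (hy : 0 < y) (hyx : y ≤ x) : Lmean x y ≤ x := by
  rcases hyx.eq_or_lt with rfl | h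
  · exact (Lmean_self y).le
  · have hx : 0 < x := hy.trans h
    rw [Lmean_of_ne h.ne', div_le_iff₀ (log_pos ((one_lt_div hy).2 h))]
    calc x - y = x * (1 - (x / y)⁻¹) := by field_simp
      _ ≤ x * log (x / y) :=
        mul_le_mul_of_nonneg_left (one_sub_inv_le_log_of_pos (by positivity)) hx.le

theorem Lmean_exp_exp_neg_le_Lmean_cosh_one (t : ℝ) :
    Lmean (exp t) (exp (-t)) ≤ Lmean (cosh t) 1 := by
  wlog ht : 0 ≤ t generalizing t
  · simpa [Lmean_comm (exp t)] using this (-t) (by linarith)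
  rcases ht.eq_or_lt with rfl | ht
  · simp
  · rw [Lmean_exp_exp_neg ht.ne', Lmean_cosh_one ht.ne']
    exact sinh_div_le_cosh_sub_one_div_log_cosh ht

theorem Lmean_le_Lmean_am_gm {a b : ℝ} (ha : 0 < a) (hb : 0 < b) :
    Lmean a b ≤ Lmean ((a + b) / 2) √(a * b) := by
  obtain ⟨m, t, rfl, rfl⟩ : ∃ m t, a = exp m * exp t ∧ b = exp m * exp (-t) :=
    ⟨(log a + log b) / 2, (log a - log b) / 2, by rw [← exp_add]; ring_nf; rw [exp_log ha],
      by rw [← exp_add]; ring_nf; rw [exp_log hb]⟩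
  have ham : (exp m * exp t + exp m * exp (-t)) / 2 = exp m * cosh t := by rw [cosh_eq]; ring
  have hgm : √(exp m * exp t * (exp m * exp (-t))) = exp m * 1 := by
    rw [show exp m * exp t * (exp m * exp (-t)) = exp m * exp m by
      rw [exp_neg]; field_simp, sqrt_mul_self (exp_pos m).le, mul_one]
  rw [ham, hgm, Lmean_mul_mul (exp_pos m).ne', Lmean_mul_mul (exp_pos m).ne']
  exact mul_le_mul_of_nonneg_left (Lmean_exp_exp_neg_le_Lmean_cosh_one t) (exp_pos m).le

section agmSeq

open NNReal

variable {x y : ℝ}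

theorem agmSeq_pos (hx : 0 < x) (hy : 0 < y) (n : ℕ) :
    0 < (agmSeq x y n).1 ∧ 0 < (agmSeq x y n).2 := by
  induction n with
  | zero => exact ⟨hx, hy⟩
  | succ n ih =>
    exact ⟨by simp only [agmSeq]; linarith [ih.1, ih.2], sqrt_pos.2 (mul_pos ih.1 ih.2)⟩

theorem Lmean_le_Lmean_agmSeq (hx : 0 < x) (hy : 0 < y) (n : ℕ) :
    Lmean x y ≤ Lmean (agmSeq x y n).1 (agmSeq x y n).2 := by
  induction n with
  | zero => rfl
  | succ n ih =>
    exact ih.trans (Lmean_le_Lmean_am_gm (agmSeq_pos hx hy n).1 (agmSeq_pos hx hy n).2)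

theorem agmSeq_succ (hx : 0 ≤ x) (hy : 0 ≤ y) (n : ℕ) :
    agmSeq x y (n + 1) = (((agmSequences x.toNNReal y.toNNReal n).2 : ℝ),
      ((agmSequences x.toNNReal y.toNNReal n).1 : ℝ)) := by
  induction n with
  | zero => simp [agmSeq, agmSequences_zero, hx, hy]
  | succ n ih =>
    rw [agmSeq, ih, agmSequences_succ']
    simp [add_comm, mul_comm]

theorem tendsto_agmSeq_fst (hx : 0 ≤ x) (hy : 0 ≤ y) :
    Tendsto (fun n => (agmSeq x y n).1) atTop (𝓝 (agm x.toNNReal y.toNNReal)) := by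
  rw [← tendsto_add_atTop_iff_nat 1]
  simpa only [agmSeq_succ hx hy] using NNReal.tendsto_coe.2 tendsto_agmSequences_snd_agm

theorem agmSeq_snd_le_fst (hx : 0 ≤ x) (hy : 0 ≤ y) (n : ℕ) :
    (agmSeq x y (n + 1)).2 ≤ (agmSeq x y (n + 1)).1 := by
  simpa only [agmSeq_succ hx hy] using NNReal.coe_le_coe.2 (agmSequences_fst_le_snd n n)

end agmSeq

theorem logMean_le_agm (x y : ℝ) (hx : 0 < x) (hy : 0 < y) :
    Lmean x y ≤ AG x y := by
  have hlim := tendsto_agmSeq_fst hx.le hy.le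
  rw [AG, hlim.limUnder_eq]
  refine ge_of_tendsto ((tendsto_add_atTop_iff_nat 1).2 hlim) (Eventually.of_forall fun n => ?_)
  calc Lmean x y ≤ Lmean (agmSeq x y (n + 1)).1 (agmSeq x y (n + 1)).2 :=
        Lmean_le_Lmean_agmSeq hx hy _
    _ ≤ (agmSeq x y (n + 1)).1 :=
        Lmean_le_of_le (agmSeq_pos hx hy _).2 (agmSeq_snd_le_fst hx.le hy.le n)
end

section
/- For all r in [0,1] and K > 0, φ_K(r)² + φ_{1/K}(√(1−r²))² = 1. -/
noncomputable def mu (r : ℝ) : ℝ :=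
  (Real.pi/2) * ellK (Real.sqrt (1 - r^2)) / ellK r

noncomputable def muInv (y : ℝ) : ℝ := Function.invFunOn mu (Set.Ioo 0 1) y

noncomputable def phi (K r : ℝ) : ℝ :=
  if r = 0 then 0 else if r = 1 then 1 else muInv (mu r / K)

/-! The modulus satisfies `μ(r) μ(√(1 - r²)) = (π/2)²`, and `μ` is a decreasing bijection
from `(0, 1)` onto `(0, ∞)`. So if `s = φ_K(r)`, i.e. `μ(s) = μ(r)/K`, then
`μ(√(1 - s²)) = K (π/2)² / μ(r) = K μ(√(1 - r²))`, which says
`φ_{1/K}(√(1 - r²)) = √(1 - s²)`. Surjectivity of `μ` rests on the blow-up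
`K(r) ≥ log (1 + π / (2 √(1 - r²))) → ∞` as `r → 1`. -/

open Real Set Filter Topology

section Complement

variable {r : ℝ}

lemma sq_lt_one_of_mem_Ioo (hr : r ∈ Ioo 0 1) : r ^ 2 < 1 :=
  pow_lt_one₀ hr.1.le hr.2 two_ne_zero

lemma sqrt_one_sub_sq_mem_Ioo (hr : r ∈ Ioo 0 1) : √(1 - r ^ 2) ∈ Ioo 0 1 := by
  obtain ⟨h0, h1⟩ := hr
  exact ⟨sqrt_pos.2 (by nlinarith), (sqrt_lt' one_pos).2 (by nlinarith)⟩

lemma sqrt_one_sub_sq_sqrt_one_sub_sq (hr : r ∈ Icc 0 1) : √(1 - √(1 - r ^ 2) ^ 2) = r := by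
  rw [sq_sqrt (by nlinarith [hr.1, hr.2]), sub_sub_cancel, sqrt_sq hr.1]

lemma tendsto_sqrt_one_sub_sq_nhdsLT_one :
    Tendsto (fun r ↦ √(1 - r ^ 2)) (𝓝[<] 1) (𝓝[>] 0) := by
  refine tendsto_nhdsWithin_iff.2 ⟨?_, ?_⟩
  · exact ((by fun_prop : Continuous fun r : ℝ ↦ √(1 - r ^ 2)).tendsto' 1 0
      (by norm_num)).mono_left nhdsWithin_le_nhds
  · filter_upwards [Ioo_mem_nhdsLT one_pos] with r hr using (sqrt_one_sub_sq_mem_Ioo hr).1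

lemma tendsto_sqrt_one_sub_sq_nhdsGT_zero :
    Tendsto (fun r ↦ √(1 - r ^ 2)) (𝓝[>] 0) (𝓝[<] 1) := by
  refine tendsto_nhdsWithin_iff.2 ⟨?_, ?_⟩
  · exact ((by fun_prop : Continuous fun r : ℝ ↦ √(1 - r ^ 2)).tendsto' 0 1
      (by norm_num)).mono_left nhdsWithin_le_nhds
  · filter_upwards [Ioo_mem_nhdsGT one_pos] with r hr using (sqrt_one_sub_sq_mem_Ioo hr).2

end Complement

section EllipticK

variable {r : ℝ}

lemma one_sub_sq_mul_sin_sq_pos (hr : r ^ 2 < 1) (θ : ℝ) : 0 < 1 - r ^ 2 * sin θ ^ 2 := by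
  nlinarith [sin_sq_le_one θ, sq_nonneg r]

lemma continuous_ellK_integrand (hr : r ^ 2 < 1) :
    Continuous fun θ ↦ 1 / √(1 - r ^ 2 * sin θ ^ 2) :=
  continuous_const.div (by fun_prop) fun θ ↦ (sqrt_pos.2 (one_sub_sq_mul_sin_sq_pos hr θ)).ne'

lemma pi_div_two_le_ellK (hr : r ^ 2 < 1) : π / 2 ≤ ellK r := by
  calc π / 2 = ∫ _ in (0:ℝ)..π / 2, (1:ℝ) := by simp
    _ ≤ ellK r := by
      refine intervalIntegral.integral_mono_on (by positivity) intervalIntegrable_const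
        ((continuous_ellK_integrand hr).intervalIntegrable _ _) fun θ _ ↦ ?_
      rw [le_div_iff₀ (sqrt_pos.2 (one_sub_sq_mul_sin_sq_pos hr θ)), one_mul]
      exact sqrt_le_one.2 (by nlinarith [sq_nonneg r, sq_nonneg (sin θ)])

lemma ellK_pos (hr : r ^ 2 < 1) : 0 < ellK r :=
  (by positivity : (0:ℝ) < π / 2).trans_le (pi_div_two_le_ellK hr)

lemma strictMonoOn_ellK : StrictMonoOn ellK (Ico 0 1) := by
  intro a ha b hb hab
  have hab2 : a ^ 2 < b ^ 2 := by nlinarith [ha.1]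
  have hb2 : b ^ 2 < 1 := by nlinarith [ha.1, hb.2]
  have hpos := one_sub_sq_mul_sin_sq_pos hb2
  refine intervalIntegral.integral_lt_integral_of_continuousOn_of_le_of_exists_lt (by positivity)
    (continuous_ellK_integrand (hab2.trans hb2)).continuousOn
    (continuous_ellK_integrand hb2).continuousOn (fun θ _ ↦ ?_)
    ⟨π / 4, ⟨by positivity, by linarith [pi_pos]⟩, ?_⟩
  · exact one_div_le_one_div_of_le (sqrt_pos.2 (hpos θ))
      (sqrt_le_sqrt (by nlinarith [sq_nonneg (sin θ)]))
  · have : 0 < sin (π / 4) := by rw [sin_pi_div_four]; positivity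
    exact one_div_lt_one_div_of_lt (sqrt_pos.2 (hpos _))
      (sqrt_lt_sqrt (hpos _).le (by nlinarith [pow_pos this 2]))

/-- Near `r`, truncating `x ^ 2` at some `b < 1` does not change the integrand and makes it
jointly continuous in `(x, θ)`. -/
lemma continuousAt_ellK (hr : r ^ 2 < 1) : ContinuousAt ellK r := by
  obtain ⟨b, hrb, hb1⟩ := exists_between hr
  have hcont :
      Continuous fun x : ℝ ↦ ∫ θ in (0:ℝ)..π / 2, 1 / √(1 - min (x ^ 2) b * sin θ ^ 2) := by
    refine intervalIntegral.continuous_parametric_intervalIntegral_of_continuous' ?_ _ _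
    refine continuous_const.div (by fun_prop) fun p ↦ (sqrt_pos.2 ?_).ne'
    nlinarith [sin_sq_le_one p.2, min_le_right (p.1 ^ 2) b,
      le_min (sq_nonneg p.1) ((sq_nonneg r).trans hrb.le)]
  refine hcont.continuousAt.congr ?_
  filter_upwards [(isOpen_lt (continuous_pow 2) continuous_const).mem_nhds hrb] with x hx
  simp only [ellK, min_eq_left hx.le]

lemma log_le_ellK (hr0 : 0 ≤ r) (hr1 : r < 1) :
    log ((√(1 - r ^ 2) + π / 2) / √(1 - r ^ 2)) ≤ ellK r := by
  set a := √(1 - r ^ 2)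
  have ha : 0 < a := sqrt_pos.2 (by nlinarith)
  have ha2 : a ^ 2 = 1 - r ^ 2 := sq_sqrt (by nlinarith)
  have hr2 : r ^ 2 < 1 := by nlinarith
  calc log ((a + π / 2) / a) = ∫ x in a..a + π / 2, 1 / x :=
        (integral_one_div_of_pos ha (by positivity)).symm
    _ = ∫ θ in (0:ℝ)..π / 2, 1 / (a + π / 2 - θ) := by
      rw [intervalIntegral.integral_comp_sub_left (fun x ↦ 1 / x)]
      simp
    _ ≤ ellK r := by
      refine intervalIntegral.integral_mono_on (by positivity) ?_
        ((continuous_ellK_integrand hr2).intervalIntegrable _ _) fun θ hθ ↦ ?_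
      · exact ContinuousOn.intervalIntegrable (continuousOn_const.div (by fun_prop)
          fun θ hθ ↦ by rw [uIcc_of_le (by positivity)] at hθ; linarith [hθ.2])
      · have hcos : cos θ ≤ π / 2 - θ := by
          simpa [sin_pi_div_two_sub] using sin_le (x := π / 2 - θ) (by linarith [hθ.2])
        have hcos0 : 0 ≤ cos θ := cos_nonneg_of_mem_Icc ⟨by linarith [hθ.1, pi_pos], hθ.2⟩
        -- `1 - r² sin² θ = a² + r² cos² θ ≤ (a + cos θ)²`
        refine one_div_le_one_div_of_le (sqrt_pos.2 (one_sub_sq_mul_sin_sq_pos hr2 θ))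
          ((sqrt_le_left (by linarith)).2 ?_)
        nlinarith [sin_sq_add_cos_sq θ, mul_le_mul_of_nonneg_right hr2.le (sq_nonneg (cos θ))]

lemma tendsto_ellK_nhdsLT_one : Tendsto ellK (𝓝[<] 1) atTop := by
  have hlog : Tendsto (fun a ↦ log ((a + π / 2) / a)) (𝓝[>] 0) atTop := by
    refine tendsto_log_atTop.comp ?_
    simp only [div_eq_mul_inv]
    refine Tendsto.pos_mul_atTop (by positivity : (0:ℝ) < 0 + π / 2) ?_ tendsto_inv_nhdsGT_zero
    exact ((continuous_add_const _).tendsto 0).mono_left nhdsWithin_le_nhds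
  refine tendsto_atTop_mono' _ ?_ (hlog.comp tendsto_sqrt_one_sub_sq_nhdsLT_one)
  filter_upwards [Ioo_mem_nhdsLT one_pos] with r hr using log_le_ellK hr.1.le hr.2

end EllipticK

section Modulus

variable {r y : ℝ}

lemma mu_pos (hr : r ∈ Ioo 0 1) : 0 < mu r := by
  have := ellK_pos (sq_lt_one_of_mem_Ioo hr)
  have := ellK_pos (sq_lt_one_of_mem_Ioo (sqrt_one_sub_sq_mem_Ioo hr))
  unfold mu
  positivity

lemma mu_sqrt_one_sub_sq (hr : r ∈ Ioo 0 1) : mu √(1 - r ^ 2) = (π / 2) ^ 2 / mu r := by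
  have := ellK_pos (sq_lt_one_of_mem_Ioo hr)
  have := ellK_pos (sq_lt_one_of_mem_Ioo (sqrt_one_sub_sq_mem_Ioo hr))
  rw [mu, mu, sqrt_one_sub_sq_sqrt_one_sub_sq (Ioo_subset_Icc_self hr)]
  field_simp

lemma strictAntiOn_mu : StrictAntiOn mu (Ioo 0 1) := by
  intro a ha b hb hab
  have ha' := sqrt_one_sub_sq_mem_Ioo ha
  have hb' := sqrt_one_sub_sq_mem_Ioo hb
  have hnum : ellK √(1 - b ^ 2) < ellK √(1 - a ^ 2) :=
    strictMonoOn_ellK (Ioo_subset_Ico_self hb') (Ioo_subset_Ico_self ha')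
      (sqrt_lt_sqrt (by nlinarith [hb.1, hb.2]) (by nlinarith [ha.1]))
  have hden : ellK a < ellK b :=
    strictMonoOn_ellK (Ioo_subset_Ico_self ha) (Ioo_subset_Ico_self hb) hab
  have := ellK_pos (sq_lt_one_of_mem_Ioo ha)
  have := ellK_pos (sq_lt_one_of_mem_Ioo ha')
  have := ellK_pos (sq_lt_one_of_mem_Ioo hb')
  unfold mu
  gcongr

lemma continuousOn_mu : ContinuousOn mu (Ioo 0 1) := fun r hr ↦ by
  have hr2 := sq_lt_one_of_mem_Ioo hr
  have hr'2 := sq_lt_one_of_mem_Ioo (sqrt_one_sub_sq_mem_Ioo hr)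
  have hnum : ContinuousAt (fun x ↦ ellK √(1 - x ^ 2)) r :=
    (continuousAt_ellK hr'2).comp (f := fun x ↦ √(1 - x ^ 2)) (by fun_prop)
  exact ((continuousAt_const.mul hnum).div (continuousAt_ellK hr2)
    (ellK_pos hr2).ne').continuousWithinAt

lemma tendsto_mu_nhdsLT_one : Tendsto mu (𝓝[<] 1) (𝓝[>] 0) := by
  refine tendsto_nhdsWithin_iff.2 ⟨?_, ?_⟩
  · have hnum : Tendsto (fun r ↦ π / 2 * ellK √(1 - r ^ 2)) (𝓝[<] 1) (𝓝 (π / 2 * ellK 0)) :=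
      ((continuousAt_ellK (by norm_num)).tendsto.comp
        (tendsto_sqrt_one_sub_sq_nhdsLT_one.mono_right nhdsWithin_le_nhds)).const_mul _
    exact hnum.div_atTop tendsto_ellK_nhdsLT_one
  · filter_upwards [Ioo_mem_nhdsLT one_pos] with r hr using mu_pos hr

lemma tendsto_mu_nhdsGT_zero : Tendsto mu (𝓝[>] 0) atTop := by
  have h : Tendsto (fun r ↦ (π / 2) ^ 2 / mu √(1 - r ^ 2)) (𝓝[>] 0) atTop := by
    simp only [div_eq_mul_inv]
    exact (tendsto_inv_nhdsGT_zero.comp (tendsto_mu_nhdsLT_one.comp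
      tendsto_sqrt_one_sub_sq_nhdsGT_zero)).const_mul_atTop (by positivity)
  refine h.congr' ?_
  filter_upwards [Ioo_mem_nhdsGT one_pos] with r hr
  rw [← mu_sqrt_one_sub_sq (sqrt_one_sub_sq_mem_Ioo hr),
    sqrt_one_sub_sq_sqrt_one_sub_sq (Ioo_subset_Icc_self hr)]

lemma surjOn_mu : SurjOn mu (Ioo 0 1) (Ioi 0) := by
  intro y hy
  obtain ⟨a, hay, ha⟩ :=
    ((tendsto_mu_nhdsGT_zero.eventually_gt_atTop y).and (Ioo_mem_nhdsGT one_pos)).exists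
  obtain ⟨b, hby, hb⟩ := (((tendsto_mu_nhdsLT_one.mono_right nhdsWithin_le_nhds).eventually
    (eventually_lt_nhds hy)).and (Ioo_mem_nhdsLT one_pos)).exists
  exact continuousOn_mu.surjOn_Icc hb ha ⟨hby.le, hay.le⟩

lemma mu_muInv (hy : 0 < y) : mu (muInv y) = y := surjOn_mu.rightInvOn_invFunOn hy

lemma muInv_mem_Ioo (hy : 0 < y) : muInv y ∈ Ioo 0 1 := surjOn_mu.mapsTo_invFunOn hy

lemma muInv_mu (hr : r ∈ Ioo 0 1) : muInv (mu r) = r :=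
  strictAntiOn_mu.injOn.leftInvOn_invFunOn hr

end Modulus

section Distortion

variable {K r : ℝ}

lemma phi_of_mem_Ioo (hr : r ∈ Ioo 0 1) : phi K r = muInv (mu r / K) := by
  rw [phi, if_neg hr.1.ne', if_neg hr.2.ne]

lemma phi_mem_Ioo (hK : 0 < K) (hr : r ∈ Ioo 0 1) : phi K r ∈ Ioo 0 1 := by
  rw [phi_of_mem_Ioo hr]
  exact muInv_mem_Ioo (div_pos (mu_pos hr) hK)

lemma phi_inv_sqrt_one_sub_sq (hK : 0 < K) (hr : r ∈ Ioo 0 1) :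
    phi (1 / K) √(1 - r ^ 2) = √(1 - phi K r ^ 2) := by
  have hs := phi_mem_Ioo hK hr
  have hmu : mu (phi K r) = mu r / K := by
    rw [phi_of_mem_Ioo hr, mu_muInv (div_pos (mu_pos hr) hK)]
  rw [phi_of_mem_Ioo (sqrt_one_sub_sq_mem_Ioo hr), ← muInv_mu (sqrt_one_sub_sq_mem_Ioo hs),
    mu_sqrt_one_sub_sq hr, mu_sqrt_one_sub_sq hs, hmu]
  have := mu_pos hr
  field_simp

end Distortion

theorem phi_sq_add (r : ℝ) (hr : r ∈ Set.Icc (0:ℝ) 1) (K : ℝ) (hK : 0 < K) :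
    (phi K r)^2 + (phi (1/K) (Real.sqrt (1 - r^2)))^2 = 1 := by
  rcases hr.1.eq_or_lt with rfl | h0
  · norm_num [phi]
  rcases hr.2.eq_or_lt with rfl | h1
  · norm_num [phi]
  have hs := phi_mem_Ioo hK ⟨h0, h1⟩
  rw [phi_inv_sqrt_one_sub_sq hK ⟨h0, h1⟩, sq_sqrt (by nlinarith [hs.1, hs.2])]
  ring
end
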